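/- Let $\Gamma \in \mathbb{R}^{d_1 d_2 \times d_1 d_2}$ be a symmetric matrix, $s \ge 1$, and $\delta > 0$. Suppose $|\tilde{v}^T \Gamma \tilde{v}| \le \delta$ for all matrices $v \in \mathbb{R}^{d_1 \times d_2}$ with $\mathrm{rank}(v) \le 2s$ and $\|v\|_F \le 1$, where $\tilde{v} = \mathrm{vec}(v)$. Then for all $v \in \mathbb{R}^{d_1 \times d_2}$, $|\tilde{v}^T \Gamma \tilde{v}| \le 27 \delta \left( \|v\|_F^2 + \frac{1}{s}\|v\|_{nuc}^2 \right)$. -/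

import Mathlib

/-!
Polarization (`4 B(x, y) = Q(x + y) - Q(x - y)` together with the parallelogram law) turns the
deviation bound on matrices of rank at most `2s` into `|B(x, y)| ≤ δ ‖x‖_F ‖y‖_F` for `x`, `y` of
rank at most `s`. Write `v = ∑ σ_k u_k w_kᵀ` with the singular values sorted decreasingly and group
consecutive terms into blocks of `m = ⌊s⌋` terms. The blocks are orthogonal of rank at most `m`, and
every singular value in a block is at most the mean of the previous block, so the Frobenius norms of
the blocks sum to at most `‖v‖_F + ‖v‖_nuc / √m`. Expanding `Q(v)` over the blocks gives
`|Q(v)| ≤ δ (‖v‖_F + ‖v‖_nuc / √m)² ≤ 4 δ (‖v‖_F² + ‖v‖_nuc² / s)`.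
-/

open scoped BigOperators
open Matrix

/-- Frobenius norm of a real matrix. -/
noncomputable def frob {m n : ℕ} (A : Matrix (Fin m) (Fin n) ℝ) : ℝ :=
  Real.sqrt (∑ i, ∑ j, (A i j) ^ 2)

/-- Nuclear norm: sum of the singular values of `A`. -/
noncomputable def nucNorm {m n : ℕ} (A : Matrix (Fin m) (Fin n) ℝ) : ℝ :=
  ∑ i, Real.sqrt ((show (Aᵀ * A).IsHermitian by
    simpa [Matrix.conjTranspose_eq_transpose_of_trivial] using
      Matrix.isHermitian_conjTranspose_mul_self A).eigenvalues i)

/-- Vectorization of a matrix (indexed by pairs). -/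
def vecR {m n : ℕ} (v : Matrix (Fin m) (Fin n) ℝ) : Fin m × Fin n → ℝ :=
  fun p => v p.1 p.2

open Finset RealInnerProductSpace

theorem norm_inv_norm_smul_self {E : Type*} [NormedAddCommGroup E] [NormedSpace ℝ E] {x : E}
    (hx : x ≠ 0) : ‖‖x‖⁻¹ • x‖ = 1 := by
  rw [norm_smul, norm_inv, norm_norm, inv_mul_cancel₀ (norm_ne_zero_iff.2 hx)]

namespace LinearMap.BilinForm

variable {E : Type*} [NormedAddCommGroup E] [InnerProductSpace ℝ E]
  {B : LinearMap.BilinForm ℝ E} {K : Set E} {δ : ℝ}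

theorem apply_eq_norm_mul_norm_mul_apply_inv_norm_smul (B : LinearMap.BilinForm ℝ E) {x y : E}
    (hx : x ≠ 0) (hy : y ≠ 0) :
    B x y = ‖x‖ * ‖y‖ * B (‖x‖⁻¹ • x) (‖y‖⁻¹ • y) := by
  simp only [map_smul, LinearMap.smul_apply, smul_eq_mul]
  field_simp

theorem abs_apply_self_le_mul_norm_sq (hK : ∀ (t : ℝ), ∀ x ∈ K, t • x ∈ K)
    (h : ∀ x ∈ K, ‖x‖ ≤ 1 → |B x x| ≤ δ) {x : E} (hx : x ∈ K) :
    |B x x| ≤ δ * ‖x‖ ^ 2 := by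
  rcases eq_or_ne x 0 with rfl | hx0
  · simp
  have hu := h _ (hK ‖x‖⁻¹ x hx) (norm_inv_norm_smul_self hx0).le
  rw [B.apply_eq_norm_mul_norm_mul_apply_inv_norm_smul hx0 hx0, abs_mul, abs_mul_self, ← sq]
  nlinarith [sq_nonneg ‖x‖]

theorem IsSymm.four_mul_apply_eq (hB : B.IsSymm) (x y : E) :
    4 * B x y = B (x + y) (x + y) - B (x - y) (x - y) := by
  simp only [map_add, map_sub, LinearMap.add_apply, LinearMap.sub_apply, hB.eq y x]
  ring

theorem abs_apply_le_mul_norm_mul_norm (hB : B.IsSymm) (hK : ∀ (t : ℝ), ∀ x ∈ K, t • x ∈ K)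
    (h : ∀ x ∈ K, ∀ y ∈ K, |B (x + y) (x + y)| ≤ δ * ‖x + y‖ ^ 2) {x y : E}
    (hx : x ∈ K) (hy : y ∈ K) : |B x y| ≤ δ * ‖x‖ * ‖y‖ := by
  have hparallelogram : ∀ u ∈ K, ∀ w ∈ K, 4 * |B u w| ≤ δ * (2 * (‖u‖ ^ 2 + ‖w‖ ^ 2)) := by
    intro u hu w hw
    have hsub : |B (u - w) (u - w)| ≤ δ * ‖u - w‖ ^ 2 := by
      simpa [sub_eq_add_neg] using h u hu (-w) (by simpa using hK (-1) w hw)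
    calc 4 * |B u w| = |B (u + w) (u + w) - B (u - w) (u - w)| := by
          rw [← hB.four_mul_apply_eq, abs_mul, abs_of_pos (four_pos (α := ℝ))]
      _ ≤ δ * ‖u + w‖ ^ 2 + δ * ‖u - w‖ ^ 2 :=
          (abs_sub _ _).trans (add_le_add (h u hu w hw) hsub)
      _ = δ * (2 * (‖u‖ ^ 2 + ‖w‖ ^ 2)) := by rw [← mul_add, parallelogram_law_with_norm ℝ]
  rcases eq_or_ne x 0 with rfl | hx0
  · simp
  rcases eq_or_ne y 0 with rfl | hy0
  · simp
  have hunit := hparallelogram _ (hK ‖x‖⁻¹ x hx) _ (hK ‖y‖⁻¹ y hy)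
  rw [norm_inv_norm_smul_self hx0, norm_inv_norm_smul_self hy0] at hunit
  rw [B.apply_eq_norm_mul_norm_mul_apply_inv_norm_smul hx0 hy0, abs_mul,
    abs_of_nonneg (by positivity)]
  nlinarith [mul_nonneg (norm_nonneg x) (norm_nonneg y)]

theorem abs_apply_sum_sum_le_mul_sq_sum_norm (h : ∀ x ∈ K, ∀ y ∈ K, |B x y| ≤ δ * ‖x‖ * ‖y‖)
    {ι : Type*} (t : Finset ι) {f : ι → E} (hf : ∀ i ∈ t, f i ∈ K) :
    |B (∑ i ∈ t, f i) (∑ i ∈ t, f i)| ≤ δ * (∑ i ∈ t, ‖f i‖) ^ 2 := by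
  simp only [map_sum, LinearMap.sum_apply]
  calc |∑ j ∈ t, ∑ i ∈ t, B (f i) (f j)| ≤ ∑ j ∈ t, ∑ i ∈ t, |B (f i) (f j)| :=
        (abs_sum_le_sum_abs _ _).trans (sum_le_sum fun j _ => abs_sum_le_sum_abs _ _)
    _ ≤ ∑ j ∈ t, ∑ i ∈ t, δ * ‖f i‖ * ‖f j‖ :=
        sum_le_sum fun j hj => sum_le_sum fun i hi => h _ (hf i hi) _ (hf j hj)
    _ = δ * (∑ i ∈ t, ‖f i‖) ^ 2 := by
        rw [sq, sum_mul_sum, mul_sum, sum_comm]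
        simp only [mul_sum, mul_assoc]

end LinearMap.BilinForm

theorem Finset.sum_range_sum_Ico_mul {M : Type*} [AddCommMonoid M] (f : ℕ → M) (m N : ℕ) :
    ∑ j ∈ range N, ∑ k ∈ Ico (j * m) ((j + 1) * m), f k = ∑ k ∈ range (N * m), f k := by
  induction N with
  | zero => simp
  | succ N ih =>
    rw [sum_range_succ, ih, sum_range_add_sum_Ico f (Nat.mul_le_mul_right m N.le_succ)]

section Shelling

variable {σ : ℕ → ℝ} {m : ℕ}

-- Every entry of a block is at most the mean of the previous block.
theorem sqrt_sum_sq_Ico_succ_le (hσ : Antitone σ) (hσ0 : ∀ k, 0 ≤ σ k) (hm : 0 < m) (j : ℕ) :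
    √(∑ k ∈ Ico ((j + 1) * m) ((j + 2) * m), σ k ^ 2) ≤
      (∑ k ∈ Ico (j * m) ((j + 1) * m), σ k) / √m := by
  set T := ∑ k ∈ Ico (j * m) ((j + 1) * m), σ k
  have hmR : (0 : ℝ) < m := Nat.cast_pos.2 hm
  have hcard : ∀ i, #(Ico (i * m) ((i + 1) * m)) = m := fun i => by
    rw [Nat.card_Ico, add_mul, one_mul, Nat.add_sub_cancel_left]
  have hle_mean : ∀ k ∈ Ico ((j + 1) * m) ((j + 2) * m), σ k ≤ T / m := by
    intro k hk
    rw [le_div_iff₀ hmR, mul_comm]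
    calc (m : ℝ) * σ k = ∑ _i ∈ Ico (j * m) ((j + 1) * m), σ k := by simp [hcard]
      _ ≤ T := sum_le_sum fun i hi => hσ (by simp at hi hk; omega)
  calc √(∑ k ∈ Ico ((j + 1) * m) ((j + 2) * m), σ k ^ 2)
      ≤ √(∑ _k ∈ Ico ((j + 1) * m) ((j + 2) * m), (T / m) ^ 2) :=
        Real.sqrt_le_sqrt <| sum_le_sum fun k hk => pow_le_pow_left₀ (hσ0 k) (hle_mean k hk) 2
    _ = T / √m := by
        rw [sum_const, hcard, nsmul_eq_mul, div_pow, Real.sqrt_eq_iff_mul_self_eq]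
        · field_simp
          rw [Real.sq_sqrt hmR.le]
          ring
        · positivity
        · exact div_nonneg (sum_nonneg fun k _ => hσ0 k) (Real.sqrt_nonneg _)

theorem sum_sqrt_sum_sq_Ico_le (hσ : Antitone σ) (hσ0 : ∀ k, 0 ≤ σ k) (hm : 0 < m) (N : ℕ) :
    ∑ j ∈ range (N + 1), √(∑ k ∈ Ico (j * m) ((j + 1) * m), σ k ^ 2) ≤
      √(∑ k ∈ range ((N + 1) * m), σ k ^ 2) + (∑ k ∈ range ((N + 1) * m), σ k) / √m := by
  rw [sum_range_succ', add_comm]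
  gcongr ?_ + ?_
  · refine Real.sqrt_le_sqrt (sum_le_sum_of_subset_of_nonneg ?_ fun k _ _ => sq_nonneg _)
    simp only [zero_mul, zero_add, one_mul, ← range_eq_Ico]
    exact range_subset_range.2 (Nat.le_mul_of_pos_left m N.succ_pos)
  · calc ∑ j ∈ range N, √(∑ k ∈ Ico ((j + 1) * m) ((j + 1 + 1) * m), σ k ^ 2)
        ≤ ∑ j ∈ range N, (∑ k ∈ Ico (j * m) ((j + 1) * m), σ k) / √m :=
          sum_le_sum fun j _ => sqrt_sum_sq_Ico_succ_le hσ hσ0 hm j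
      _ = (∑ k ∈ range (N * m), σ k) / √m := by rw [← sum_div, sum_range_sum_Ico_mul]
      _ ≤ (∑ k ∈ range ((N + 1) * m), σ k) / √m := by
          gcongr
          · exact fun k _ _ => hσ0 k
          · exact N.le_succ

end Shelling

section Orthogonal

variable {E : Type*} [NormedAddCommGroup E] [InnerProductSpace ℝ E]

theorem norm_sum_eq_sqrt_sum_norm_sq_of_pairwise {ι : Type*} {x : ι → E}
    (hx : Pairwise fun i j => ⟪x i, x j⟫ = 0) (t : Finset ι) :
    ‖∑ i ∈ t, x i‖ = √(∑ i ∈ t, ‖x i‖ ^ 2) := by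
  have hsq : ‖∑ i ∈ t, x i‖ ^ 2 = ∑ i ∈ t, ‖x i‖ ^ 2 := by
    rw [← real_inner_self_eq_norm_sq, sum_inner]
    refine sum_congr rfl fun i hi => ?_
    rw [inner_sum, sum_eq_single_of_mem i hi fun j _ hji => hx hji.symm,
      real_inner_self_eq_norm_sq]
  rw [← hsq, Real.sqrt_sq (norm_nonneg _)]

theorem sum_norm_sum_Ico_le {x : ℕ → E} (hx : Pairwise fun k l => ⟪x k, x l⟫ = 0)
    (hanti : Antitone fun k => ‖x k‖) {m : ℕ} (hm : 0 < m) (N : ℕ) :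
    ∑ j ∈ range (N + 1), ‖∑ k ∈ Ico (j * m) ((j + 1) * m), x k‖ ≤
      ‖∑ k ∈ range ((N + 1) * m), x k‖ + (∑ k ∈ range ((N + 1) * m), ‖x k‖) / √m := by
  simp only [norm_sum_eq_sqrt_sum_norm_sq_of_pairwise hx]
  exact sum_sqrt_sum_sq_Ico_le hanti (fun k => norm_nonneg _) hm N

end Orthogonal

section Rearrangement

theorem Function.extend_val_of_le {α : Type*} [Zero α] {n k : ℕ} (f : Fin n → α) (hk : n ≤ k) :
    Function.extend Fin.val f 0 k = 0 :=
  Function.extend_apply' _ _ _ fun ⟨i, hi⟩ => by omega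

theorem Finset.sum_range_extend_val {α M : Type*} [Zero α] [AddCommMonoid M] {n N : ℕ}
    (f : Fin n → α) (g : α → M) (hg : g 0 = 0) (hN : n ≤ N) :
    ∑ k ∈ range N, g (Function.extend Fin.val f 0 k) = ∑ i, g (f i) := by
  rw [← sum_subset (range_subset_range.2 hN) fun k _ hkn => by
      rw [Function.extend_val_of_le f (by simpa using hkn), hg],
    ← Fin.sum_univ_eq_sum_range (fun k => g (Function.extend Fin.val f 0 k))]
  simp only [Fin.val_injective.extend_apply]

variable {E : Type*} [NormedAddCommGroup E] [InnerProductSpace ℝ E]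

theorem exists_antitone_norm_rearrangement {n : ℕ} {K : Set E} (hK : 0 ∈ K) {x : Fin n → E}
    (hxK : ∀ i, x i ∈ K) (hx : Pairwise fun i j => ⟪x i, x j⟫ = 0) :
    ∃ y : ℕ → E, (∀ k, y k ∈ K) ∧ (Pairwise fun k l => ⟪y k, y l⟫ = 0) ∧
      Antitone (fun k => ‖y k‖) ∧
      ∀ N, n ≤ N → ∑ k ∈ range N, y k = ∑ i, x i ∧ ∑ k ∈ range N, ‖y k‖ = ∑ i, ‖x i‖ := by
  set τ := Tuple.sort fun i => -‖x i‖
  have hτ := Tuple.monotone_sort fun i => -‖x i‖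
  set y := Function.extend Fin.val (x ∘ τ) 0
  have hy : ∀ k (hk : k < n), y k = x (τ ⟨k, hk⟩) := fun k hk =>
    Fin.val_injective.extend_apply (x ∘ τ) 0 ⟨k, hk⟩
  have hy0 : ∀ k, n ≤ k → y k = 0 := fun k => Function.extend_val_of_le _
  refine ⟨y, fun k => ?_, fun k l hkl => ?_, fun k l hkl => ?_, fun N hN => ⟨?_, ?_⟩⟩
  · rcases lt_or_ge k n with hk | hk
    · rw [hy k hk]; exact hxK _
    · rw [hy0 k hk]; exact hK
  · rcases lt_or_ge k n with hk | hk
    · rcases lt_or_ge l n with hl | hl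
      · rw [hy k hk, hy l hl]
        exact hx (τ.injective.ne (by simpa [Fin.ext_iff] using hkl))
      · rw [hy0 l hl, inner_zero_right]
    · rw [hy0 k hk, inner_zero_left]
  · rcases lt_or_ge l n with hl | hl
    · have hk : k < n := by omega
      simp only [hy k hk, hy l hl]
      simpa using hτ (show (⟨k, hk⟩ : Fin n) ≤ ⟨l, hl⟩ from hkl)
    · simp only [hy0 l hl, norm_zero, norm_nonneg]
  · exact (sum_range_extend_val (x ∘ τ) id rfl hN).trans (Equiv.sum_comp τ x)
  · exact (sum_range_extend_val (x ∘ τ) (‖·‖) norm_zero hN).trans (Equiv.sum_comp τ (‖x ·‖))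

end Rearrangement

theorem Matrix.rank_add_le {K m n : Type*} [Field K] [Fintype n] (A B : Matrix m n K) :
    (A + B).rank ≤ A.rank + B.rank := by
  rw [Matrix.rank, Matrix.rank, Matrix.rank, Matrix.mulVecLin_add]
  refine (Submodule.finrank_mono ?_).trans (Submodule.finrank_add_le_finrank_add_finrank _ _)
  rintro _ ⟨y, rfl⟩
  exact Submodule.add_mem_sup ⟨y, rfl⟩ ⟨y, rfl⟩

theorem Matrix.rank_smul_le {K m n : Type*} [Field K] [Fintype m] [Fintype n] (t : K)
    (A : Matrix m n K) : (t • A).rank ≤ A.rank := by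
  classical
  rw [show t • A = (t • (1 : Matrix m m K)) * A by rw [Matrix.smul_mul, Matrix.one_mul]]
  exact Matrix.rank_mul_le_right _ _

section Vectorization

variable {d₁ d₂ : ℕ}

def vecEuclid : Matrix (Fin d₁) (Fin d₂) ℝ →ₗ[ℝ] EuclideanSpace ℝ (Fin d₁ × Fin d₂) where
  toFun v := WithLp.toLp 2 (vecR v)
  map_add' _ _ := rfl
  map_smul' _ _ := rfl

@[simp]
theorem ofLp_vecEuclid (v : Matrix (Fin d₁) (Fin d₂) ℝ) : (vecEuclid v).ofLp = vecR v :=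
  rfl

theorem norm_vecEuclid (v : Matrix (Fin d₁) (Fin d₂) ℝ) : ‖vecEuclid v‖ = frob v := by
  simp [EuclideanSpace.norm_eq, frob, Fintype.sum_prod_type, vecR]

theorem inner_vecEuclid_vecMulVec (a c : Fin d₁ → ℝ) (b d : Fin d₂ → ℝ) :
    ⟪vecEuclid (vecMulVec a b), vecEuclid (vecMulVec c d)⟫ = (a ⬝ᵥ c) * (b ⬝ᵥ d) := by
  simp only [EuclideanSpace.inner_eq_star_dotProduct, dotProduct, Fintype.sum_prod_type,
    ofLp_vecEuclid, vecR, vecMulVec_apply, star_trivial, sum_mul_sum]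
  exact sum_congr rfl fun i _ => sum_congr rfl fun j _ => by ring

def lowRank (d₁ d₂ : ℕ) (r : ℝ) : Set (EuclideanSpace ℝ (Fin d₁ × Fin d₂)) :=
  vecEuclid '' {v | (v.rank : ℝ) ≤ r}

theorem smul_mem_lowRank {r : ℝ} (t : ℝ) {x} (hx : x ∈ lowRank d₁ d₂ r) :
    t • x ∈ lowRank d₁ d₂ r := by
  obtain ⟨v, hv, rfl⟩ := hx
  have hrank : ((t • v).rank : ℝ) ≤ v.rank := by exact_mod_cast Matrix.rank_smul_le t v
  exact ⟨t • v, hrank.trans hv, map_smul _ _ _⟩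

theorem add_mem_lowRank {r r' : ℝ} {x y} (hx : x ∈ lowRank d₁ d₂ r) (hy : y ∈ lowRank d₁ d₂ r') :
    x + y ∈ lowRank d₁ d₂ (r + r') := by
  obtain ⟨v, hv, rfl⟩ := hx
  obtain ⟨w, hw, rfl⟩ := hy
  refine ⟨v + w, ?_, map_add _ _ _⟩
  calc ((v + w).rank : ℝ) ≤ v.rank + w.rank := by exact_mod_cast Matrix.rank_add_le v w
    _ ≤ r + r' := add_le_add hv hw

theorem zero_mem_lowRank {r : ℝ} (hr : 0 ≤ r) : 0 ∈ lowRank d₁ d₂ r :=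
  ⟨0, by simpa using hr, map_zero _⟩

theorem sum_mem_lowRank {ι : Type*} (t : Finset ι) {f : ι → EuclideanSpace ℝ (Fin d₁ × Fin d₂)}
    {r : ι → ℝ} (hr : ∀ i ∈ t, 0 ≤ r i) (hf : ∀ i ∈ t, f i ∈ lowRank d₁ d₂ (r i)) :
    ∑ i ∈ t, f i ∈ lowRank d₁ d₂ (∑ i ∈ t, r i) := by
  induction t using Finset.cons_induction with
  | empty => simpa using zero_mem_lowRank le_rfl
  | cons a t ha ih =>
    rw [sum_cons, sum_cons]
    exact add_mem_lowRank (hf a (mem_cons_self a t))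
      (ih (fun i hi => hr i (mem_cons_of_mem hi)) fun i hi => hf i (mem_cons_of_mem hi))

theorem lowRank_mono {r r' : ℝ} (h : r ≤ r') : lowRank d₁ d₂ r ⊆ lowRank d₁ d₂ r' :=
  Set.image_mono fun _ hv => le_trans hv h

end Vectorization

def Matrix.toEuclideanBilin {ι : Type*} [Fintype ι] [DecidableEq ι] (Γ : Matrix ι ι ℝ) :
    LinearMap.BilinForm ℝ (EuclideanSpace ℝ ι) :=
  Γ.toBilin'.comp (WithLp.linearEquiv 2 ℝ (ι → ℝ)).toLinearMap
    (WithLp.linearEquiv 2 ℝ (ι → ℝ)).toLinearMap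

theorem Matrix.toEuclideanBilin_apply {ι : Type*} [Fintype ι] [DecidableEq ι] (Γ : Matrix ι ι ℝ)
    (x y : EuclideanSpace ℝ ι) : Γ.toEuclideanBilin x y = x.ofLp ⬝ᵥ Γ *ᵥ y.ofLp :=
  Matrix.toBilin'_apply' Γ x.ofLp y.ofLp

theorem Matrix.IsSymm.toEuclideanBilin {ι : Type*} [Fintype ι] [DecidableEq ι]
    {Γ : Matrix ι ι ℝ} (hΓ : Γ.IsSymm) : Γ.toEuclideanBilin.IsSymm :=
  ⟨fun x y => (Matrix.isSymm_toBilin'_iff_isSymm.2 hΓ).eq x.ofLp y.ofLp⟩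

theorem Matrix.sum_vecMulVec_mulVec_orthonormalBasis {m n : Type*} [Fintype m] [Fintype n]
    (b : OrthonormalBasis n ℝ (EuclideanSpace ℝ n)) (v : Matrix m n ℝ) :
    ∑ i, vecMulVec (v *ᵥ (b i).ofLp) (b i).ofLp = v := by
  ext p q
  have hrow := congrArg (fun x : EuclideanSpace ℝ n => x q) (b.sum_repr' (WithLp.toLp 2 (v p)))
  simpa [Matrix.sum_apply, vecMulVec_apply, EuclideanSpace.inner_eq_star_dotProduct, mulVec,
    dotProduct_comm] using hrow

theorem exists_orthogonal_rankOne_decomposition {d₁ d₂ : ℕ} (v : Matrix (Fin d₁) (Fin d₂) ℝ) :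
    ∃ x : Fin d₂ → EuclideanSpace ℝ (Fin d₁ × Fin d₂), (∀ i, x i ∈ lowRank d₁ d₂ 1) ∧
      (Pairwise fun i j => ⟪x i, x j⟫ = 0) ∧ ∑ i, x i = vecEuclid v ∧ ∑ i, ‖x i‖ = nucNorm v := by
  have hG : (vᵀ * v).IsHermitian := by
    simpa [conjTranspose_eq_transpose_of_trivial] using isHermitian_conjTranspose_mul_self v
  set b := hG.eigenvectorBasis
  have hb : ∀ i j, (b i).ofLp ⬝ᵥ (b j).ofLp = if i = j then 1 else 0 := fun i j => by
    simpa [EuclideanSpace.inner_eq_star_dotProduct, dotProduct_comm] using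
      orthonormal_iff_ite.1 b.orthonormal i j
  set r : Fin d₂ → Matrix (Fin d₁) (Fin d₂) ℝ := fun i => vecMulVec (v *ᵥ (b i).ofLp) (b i).ofLp
  have hnorm : ∀ i, ‖vecEuclid (r i)‖ = √(hG.eigenvalues i) := fun i => by
    rw [← Real.sqrt_sq (norm_nonneg _), ← real_inner_self_eq_norm_sq, inner_vecEuclid_vecMulVec,
      hb, if_pos rfl, mul_one, dotProduct_mulVec, ← mulVec_transpose, mulVec_mulVec,
      hG.mulVec_eigenvectorBasis, smul_dotProduct, hb, if_pos rfl, smul_eq_mul, mul_one]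
  refine ⟨fun i => vecEuclid (r i), fun i => ⟨r i, ?_, rfl⟩, fun i j hij => ?_, ?_, ?_⟩
  · have hrank : (r i).rank ≤ 1 := rank_vecMulVec_le _ _
    show ((r i).rank : ℝ) ≤ 1
    exact_mod_cast hrank
  · exact (inner_vecEuclid_vecMulVec _ _ _ _).trans (by rw [hb, if_neg hij, mul_zero])
  · rw [← map_sum, sum_vecMulVec_mulVec_orthonormalBasis]
  · simp only [hnorm]
    rfl

theorem Matrix.toEuclideanBilin_vecEuclid {d₁ d₂ : ℕ}
    (Γ : Matrix (Fin d₁ × Fin d₂) (Fin d₁ × Fin d₂) ℝ) (v w : Matrix (Fin d₁) (Fin d₂) ℝ) :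
    Γ.toEuclideanBilin (vecEuclid v) (vecEuclid w) = vecR v ⬝ᵥ Γ *ᵥ vecR w := by
  rw [Matrix.toEuclideanBilin_apply, ofLp_vecEuclid, ofLp_vecEuclid]

theorem Matrix.IsSymm.abs_toEuclideanBilin_le {d₁ d₂ : ℕ}
    {Γ : Matrix (Fin d₁ × Fin d₂) (Fin d₁ × Fin d₂) ℝ} (hΓ : Γ.IsSymm) {s δ : ℝ}
    (hdev : ∀ v : Matrix (Fin d₁) (Fin d₂) ℝ,
      (v.rank : ℝ) ≤ 2 * s → frob v ≤ 1 → |vecR v ⬝ᵥ Γ *ᵥ vecR v| ≤ δ)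
    {x y : EuclideanSpace ℝ (Fin d₁ × Fin d₂)} (hx : x ∈ lowRank d₁ d₂ s)
    (hy : y ∈ lowRank d₁ d₂ s) : |Γ.toEuclideanBilin x y| ≤ δ * ‖x‖ * ‖y‖ := by
  have hcone : ∀ r (t : ℝ), ∀ x ∈ lowRank d₁ d₂ r, t • x ∈ lowRank d₁ d₂ r :=
    fun _ t _ => smul_mem_lowRank t
  have hQ : ∀ z ∈ lowRank d₁ d₂ (2 * s), |Γ.toEuclideanBilin z z| ≤ δ * ‖z‖ ^ 2 := by
    refine fun z hz => LinearMap.BilinForm.abs_apply_self_le_mul_norm_sq (hcone _) ?_ hz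
    rintro _ ⟨w, hw, rfl⟩ hw1
    rw [Matrix.toEuclideanBilin_vecEuclid]
    exact hdev w hw ((norm_vecEuclid w).symm.trans_le hw1)
  exact LinearMap.BilinForm.abs_apply_le_mul_norm_mul_norm hΓ.toEuclideanBilin (hcone s)
    (fun x hx y hy => hQ _ (two_mul s ▸ add_mem_lowRank hx hy)) hx hy

theorem exists_lowRank_blocks {d₁ d₂ : ℕ} (v : Matrix (Fin d₁) (Fin d₂) ℝ) {m : ℕ} (hm : 0 < m) :
    ∃ z : ℕ → EuclideanSpace ℝ (Fin d₁ × Fin d₂), (∀ j, z j ∈ lowRank d₁ d₂ m) ∧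
      ∑ j ∈ range (d₂ + 1), z j = vecEuclid v ∧
      ∑ j ∈ range (d₂ + 1), ‖z j‖ ≤ frob v + nucNorm v / √m := by
  obtain ⟨x, hxK, horth, hsum, hnuc⟩ := exists_orthogonal_rankOne_decomposition v
  obtain ⟨y, hyK, hyorth, hanti, hysum⟩ :=
    exists_antitone_norm_rearrangement (zero_mem_lowRank zero_le_one) hxK horth
  obtain ⟨hyv, hynuc⟩ := hysum ((d₂ + 1) * m) (by nlinarith)
  refine ⟨fun j => ∑ k ∈ Ico (j * m) ((j + 1) * m), y k, fun j => ?_, ?_, ?_⟩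
  · simpa [add_mul] using
      sum_mem_lowRank (Ico (j * m) ((j + 1) * m)) (fun _ _ => zero_le_one) fun k _ => hyK k
  · rw [sum_range_sum_Ico_mul, hyv, hsum]
  · simpa [hyv, hynuc, hsum, hnuc, norm_vecEuclid] using sum_norm_sum_Ico_le hyorth hanti hm d₂

theorem sq_add_div_sqrt_floor_le {s : ℝ} (hs : 1 ≤ s) (a b : ℝ) :
    (a + b / √⌊s⌋₊) ^ 2 ≤ 4 * (a ^ 2 + b ^ 2 / s) := by
  have hm : (0 : ℝ) < ⌊s⌋₊ := by exact_mod_cast Nat.floor_pos.2 hs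
  have hsm : s ≤ 2 * ⌊s⌋₊ := by
    have := Nat.lt_floor_add_one s
    have : (1 : ℝ) ≤ ⌊s⌋₊ := by exact_mod_cast Nat.floor_pos.2 hs
    linarith
  have hsq : (b / √⌊s⌋₊) ^ 2 = b ^ 2 / ⌊s⌋₊ := by rw [div_pow, Real.sq_sqrt hm.le]
  have hfloor : b ^ 2 / ⌊s⌋₊ ≤ 2 * (b ^ 2 / s) := by
    rw [mul_div_assoc', div_le_div_iff₀ hm (by linarith)]
    nlinarith [sq_nonneg b]
  nlinarith [sq_nonneg (a - b / √⌊s⌋₊)]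

/-- Deviation-condition transfer: if `|ṽᵀ Γ ṽ| ≤ δ` for all `v` with
`rank v ≤ 2s`, `‖v‖_F ≤ 1`, then for all `v`,
`|ṽᵀ Γ ṽ| ≤ 27 δ (‖v‖_F² + ‖v‖_nuc²/s)`. -/
theorem deviation_condition_transfer (d₁ d₂ : ℕ) (s δ : ℝ) (hs : 1 ≤ s)
    (hδ : 0 < δ)
    (Γ : Matrix (Fin d₁ × Fin d₂) (Fin d₁ × Fin d₂) ℝ) (hΓ : Γ.IsSymm)
    (hdev : ∀ v : Matrix (Fin d₁) (Fin d₂) ℝ,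
      (v.rank : ℝ) ≤ 2 * s → frob v ≤ 1 →
      |vecR v ⬝ᵥ Γ.mulVec (vecR v)| ≤ δ) :
    ∀ v : Matrix (Fin d₁) (Fin d₂) ℝ,
      |vecR v ⬝ᵥ Γ.mulVec (vecR v)| ≤ 27 * δ * (frob v ^ 2 + nucNorm v ^ 2 / s) := by
  intro v
  obtain ⟨z, hz, hzv, hznorm⟩ := exists_lowRank_blocks v (Nat.floor_pos.2 hs)
  have hzs : ∀ j ∈ range (d₂ + 1), z j ∈ lowRank d₁ d₂ s :=
    fun j _ => lowRank_mono (Nat.floor_le (zero_le_one.trans hs)) (hz j)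
  have hX : 0 ≤ frob v ^ 2 + nucNorm v ^ 2 / s := by positivity
  calc |vecR v ⬝ᵥ Γ *ᵥ vecR v|
      = |Γ.toEuclideanBilin (∑ j ∈ range (d₂ + 1), z j) (∑ j ∈ range (d₂ + 1), z j)| := by
        rw [hzv, Matrix.toEuclideanBilin_vecEuclid]
    _ ≤ δ * (∑ j ∈ range (d₂ + 1), ‖z j‖) ^ 2 :=
        LinearMap.BilinForm.abs_apply_sum_sum_le_mul_sq_sum_norm
          (fun _ hx _ hy => hΓ.abs_toEuclideanBilin_le hdev hx hy) _ hzs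
    _ ≤ δ * (frob v + nucNorm v / √⌊s⌋₊) ^ 2 := by gcongr
    _ ≤ δ * (4 * (frob v ^ 2 + nucNorm v ^ 2 / s)) := by
        gcongr
        exact sq_add_div_sqrt_floor_le hs _ _
    _ ≤ 27 * δ * (frob v ^ 2 + nucNorm v ^ 2 / s) := by nlinarith
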